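/- Let X ⊂ ℝ^p, Y ⊂ ℝ^q be compact sets, α, β nonzero finite positive Radon measures on X, Y, φ₁, φ₂ entropy functions, r > 0, ε ≥ 0. If (M*, π*) minimizes the objective (M,π) ↦ −∫⟨Mx,y⟩ dπ + D_{φ₁}(π₁‖α) + D_{φ₂}(π₂‖β) + ε·D_KL(π‖α⊗β) over F_r × M⁺(X×Y), then π* minimizes the reduced functional G_ε(π) = −r·‖C(π)‖_F + D_{φ₁}(π₁‖α) + D_{φ₂}(π₂‖β) + ε·D_KL(π‖α⊗β) over all π ∈ M⁺(X×Y), where C(π) = ∫ y xᵀ dπ; moreover the optimal values of the two problems coincide. -/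

import Mathlib

open MeasureTheory Filter Set Pointwise
open scoped ENNReal NNReal

noncomputable section

/-- The recession slope `φ'_∞ = lim_{x→∞} φ(x)/x` of an entropy function. -/
def phiRecession (φ : ℝ → ℝ≥0∞) : ℝ≥0∞ :=
  Filter.limsup (fun x : ℝ => φ x / ENNReal.ofReal x) Filter.atTop

/-- An entropy function: convex, lower semicontinuous `φ : [0,∞) → [0,∞]` with `φ(1) = 0`. -/
def IsEntropyFunction (φ : ℝ → ℝ≥0∞) : Prop :=
  φ 1 = 0 ∧ LowerSemicontinuous φ ∧
    ∀ x ∈ Set.Ici (0 : ℝ), ∀ y ∈ Set.Ici (0 : ℝ), ∀ t ∈ Set.Icc (0 : ℝ) 1,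
      φ (t * x + (1 - t) * y) ≤ ENNReal.ofReal t * φ x + ENNReal.ofReal (1 - t) * φ y

/-- Strict convexity of an entropy function on its (finiteness) domain. -/
def IsStrictlyConvexEntropy (φ : ℝ → ℝ≥0∞) : Prop :=
  ∀ x ∈ Set.Ici (0 : ℝ), ∀ y ∈ Set.Ici (0 : ℝ), x ≠ y → φ x ≠ ⊤ → φ y ≠ ⊤ →
    ∀ t ∈ Set.Ioo (0 : ℝ) 1,
      φ (t * x + (1 - t) * y) < ENNReal.ofReal t * φ x + ENNReal.ofReal (1 - t) * φ y

/-- `dom φ = {x ∈ [0,∞) : φ(x) < ∞}`. -/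
def phiDom (φ : ℝ → ℝ≥0∞) : Set ℝ := {x | 0 ≤ x ∧ φ x ≠ ⊤}

/-- The entropy function `ι_{{1}}`: `0` at `1` and `+∞` elsewhere. -/
def iotaOne : ℝ → ℝ≥0∞ := fun x => if x = 1 then 0 else ⊤

/-- The φ-divergence `D_φ(μ‖ν) = ∫ φ(dμ/dν) dν + φ'_∞ · μ^⊥(univ)`. -/
def phiDiv {Z : Type*} [MeasurableSpace Z] (φ : ℝ → ℝ≥0∞) (μ ν : Measure Z) : ℝ≥0∞ :=
  (∫⁻ z, φ ((μ.rnDeriv ν z).toReal) ∂ν) + phiRecession φ * μ.singularPart ν Set.univ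

/-- The entropy function `φ_KL(x) = x log x − x + 1` generating the KL divergence. -/
def phiKL : ℝ → ℝ≥0∞ := fun x => ENNReal.ofReal (x * Real.log x - x + 1)

/-- The strong compatibility condition (C2). -/
def StrongCompat (φ₁ φ₂ : ℝ → ℝ≥0∞) (mα mβ : ℝ) : Prop :=
  ((interior (mα • phiDom φ₁) ∩ (mβ • phiDom φ₂)) ∪
    ((mα • phiDom φ₁) ∩ interior (mβ • phiDom φ₂))).Nonempty

/-- The Frobenius norm of a real `q × p` matrix. -/
def frobNorm {q p : ℕ} (M : Matrix (Fin q) (Fin p) ℝ) : ℝ :=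
  Real.sqrt (∑ i, ∑ j, (M i j) ^ 2)

/-- `C(π) = ∫ y xᵀ dπ(x,y)`, the entrywise integral of `(x,y) ↦ y xᵀ`. -/
def Cmat {p q : ℕ} (π : Measure ((Fin p → ℝ) × (Fin q → ℝ))) :
    Matrix (Fin q) (Fin p) ℝ :=
  Matrix.of fun i j => ∫ z, z.2 i * z.1 j ∂π

/-- `∫ ⟨Mx, y⟩ dπ(x,y)` with the Euclidean inner product on `ℝ^q`. -/
def ipIntegral {p q : ℕ} (M : Matrix (Fin q) (Fin p) ℝ)
    (π : Measure ((Fin p → ℝ) × (Fin q → ℝ))) : ℝ :=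
  ∫ z, ∑ i, ∑ j, M i j * z.1 j * z.2 i ∂π

/-- `M(π) = r·C(π)/‖C(π)‖_F` if `C(π) ≠ 0`, and `0` otherwise. -/
def Mopt {p q : ℕ} (r : ℝ) (π : Measure ((Fin p → ℝ) × (Fin q → ℝ))) :
    Matrix (Fin q) (Fin p) ℝ :=
  if Cmat π = 0 then 0 else (r / frobNorm (Cmat π)) • Cmat π

/-- The objective of `CR_rUOT_ε(α,β)`:
`(M,π) ↦ −∫⟨Mx,y⟩ dπ + D_{φ₁}(π₁‖α) + D_{φ₂}(π₂‖β) + ε·D_KL(π‖α⊗β)`. -/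
def Jip {p q : ℕ} (α : Measure (Fin p → ℝ)) (β : Measure (Fin q → ℝ))
    (φ₁ φ₂ : ℝ → ℝ≥0∞) (ε : ℝ) (M : Matrix (Fin q) (Fin p) ℝ)
    (π : Measure ((Fin p → ℝ) × (Fin q → ℝ))) : EReal :=
  ((-(ipIntegral M π) : ℝ) : EReal)
    + ((phiDiv φ₁ (π.map Prod.fst) α : ℝ≥0∞) : EReal)
    + ((phiDiv φ₂ (π.map Prod.snd) β : ℝ≥0∞) : EReal)
    + ((ENNReal.ofReal ε * phiDiv phiKL π (α.prod β) : ℝ≥0∞) : EReal)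

/-- The reduced functional
`G_ε(π) = −r·‖C(π)‖_F + D_{φ₁}(π₁‖α) + D_{φ₂}(π₂‖β) + ε·D_KL(π‖α⊗β)`. -/
def Gred {p q : ℕ} (α : Measure (Fin p → ℝ)) (β : Measure (Fin q → ℝ))
    (φ₁ φ₂ : ℝ → ℝ≥0∞) (ε r : ℝ)
    (π : Measure ((Fin p → ℝ) × (Fin q → ℝ))) : EReal :=
  ((-(r * frobNorm (Cmat π)) : ℝ) : EReal)
    + ((phiDiv φ₁ (π.map Prod.fst) α : ℝ≥0∞) : EReal)
    + ((phiDiv φ₂ (π.map Prod.snd) β : ℝ≥0∞) : EReal)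
    + ((ENNReal.ofReal ε * phiDiv phiKL π (α.prod β) : ℝ≥0∞) : EReal)

/-!
For a fixed plan `π`, the inner product `∫⟨Mx, y⟩ dπ` equals the Frobenius pairing of `M` with
`C(π)`, so by Cauchy–Schwarz its maximum over `‖M‖_F ≤ r` is `r‖C(π)‖_F`, attained at
`M = r C(π)/‖C(π)‖_F`. Hence `G_ε(π)` is the least value of the objective over `M ∈ F_r`, and a
joint minimizer of a function of two variables always minimizes its partial minimum.
-/

theorem isMinOn_and_eq_of_isLeast_image {ι κ γ : Type*} [PartialOrder γ]
    {f : ι → κ → γ} {g : κ → γ} {s : Set ι} {t : Set κ}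
    (hg : ∀ b ∈ t, IsLeast ((f · b) '' s) (g b)) {a₀ : ι} {b₀ : κ} (ha₀ : a₀ ∈ s)
    (hb₀ : b₀ ∈ t) (hmin : ∀ a ∈ s, ∀ b ∈ t, f a₀ b₀ ≤ f a b) :
    IsMinOn g t b₀ ∧ f a₀ b₀ = g b₀ := by
  obtain ⟨⟨a, ha, hfa⟩, hlower⟩ := hg b₀ hb₀
  have heq : f a₀ b₀ = g b₀ := le_antisymm (hfa ▸ hmin a ha b₀ hb₀) (hlower ⟨a₀, ha₀, rfl⟩)
  refine ⟨isMinOn_iff.2 fun b hb => ?_, heq⟩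
  obtain ⟨⟨a', ha', hfa'⟩, -⟩ := hg b hb
  calc g b₀ = f a₀ b₀ := heq.symm
    _ ≤ f a' b := hmin a' ha' b hb
    _ = g b := hfa'

theorem Continuous.integrable_of_measure_compl_eq_zero {Z E : Type*} [TopologicalSpace Z]
    [T2Space Z] [MeasurableSpace Z] [OpensMeasurableSpace Z] [NormedAddCommGroup E]
    {μ : Measure Z} [IsFiniteMeasureOnCompacts μ] {f : Z → E} {K : Set Z} (hf : Continuous f)
    (hK : IsCompact K) (hμK : μ Kᶜ = 0) : Integrable f μ := by
  have hfK : IntegrableOn f K μ := hf.continuousOn.integrableOn_compact hK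
  rwa [IntegrableOn, Measure.restrict_eq_self_of_ae_mem (mem_ae_iff.2 hμK)] at hfK

section Frobenius

variable {p q : ℕ}

theorem frobNorm_nonneg (M : Matrix (Fin q) (Fin p) ℝ) : 0 ≤ frobNorm M :=
  Real.sqrt_nonneg _

theorem frobNorm_sq (M : Matrix (Fin q) (Fin p) ℝ) : frobNorm M ^ 2 = ∑ i, ∑ j, M i j ^ 2 :=
  Real.sq_sqrt (by positivity)

theorem frobNorm_smul (c : ℝ) (M : Matrix (Fin q) (Fin p) ℝ) :
    frobNorm (c • M) = |c| * frobNorm M := by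
  simp only [frobNorm, Matrix.smul_apply, smul_eq_mul, mul_pow, ← Finset.mul_sum]
  rw [Real.sqrt_mul (sq_nonneg c), Real.sqrt_sq_eq_abs]

theorem sum_mul_le_frobNorm_mul (M C : Matrix (Fin q) (Fin p) ℝ) :
    ∑ i, ∑ j, M i j * C i j ≤ frobNorm M * frobNorm C := by
  simpa [frobNorm, Fintype.sum_prod_type] using
    Real.sum_mul_le_sqrt_mul_sqrt Finset.univ (fun x : Fin q × Fin p => M x.1 x.2)
      (fun x => C x.1 x.2)

theorem frobNorm_Mopt_le {r : ℝ} (hr : 0 ≤ r) (π : Measure ((Fin p → ℝ) × (Fin q → ℝ))) :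
    frobNorm (Mopt r π) ≤ r := by
  unfold Mopt
  split_ifs
  · simpa [frobNorm] using hr
  · rw [frobNorm_smul, abs_of_nonneg (div_nonneg hr (frobNorm_nonneg _))]
    rcases eq_or_ne (frobNorm (Cmat π)) 0 with h0 | h0
    · simpa [h0] using hr
    · rw [div_mul_cancel₀ _ h0]

end Frobenius

section Reduction

variable {p q : ℕ} {π : Measure ((Fin p → ℝ) × (Fin q → ℝ))}

theorem ipIntegral_eq_sum_mul_Cmat (M : Matrix (Fin q) (Fin p) ℝ)
    (hint : ∀ i j, Integrable (fun z : (Fin p → ℝ) × (Fin q → ℝ) => z.2 i * z.1 j) π) :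
    ipIntegral M π = ∑ i, ∑ j, M i j * Cmat π i j := by
  have hterm : ∀ i j, Integrable (fun z : (Fin p → ℝ) × (Fin q → ℝ) => M i j * z.1 j * z.2 i) π :=
    fun i j => ((hint i j).const_mul (M i j)).congr (ae_of_all _ fun z => by ring)
  rw [ipIntegral, integral_finsetSum _ fun i _ => integrable_finsetSum _ fun j _ => hterm i j]
  refine Finset.sum_congr rfl fun i _ => ?_
  rw [integral_finsetSum _ fun j _ => hterm i j]
  refine Finset.sum_congr rfl fun j _ => ?_
  rw [Cmat, Matrix.of_apply, ← integral_const_mul]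
  congr 1 with z
  ring

theorem ipIntegral_le_mul_frobNorm_Cmat {M : Matrix (Fin q) (Fin p) ℝ} {r : ℝ}
    (hint : ∀ i j, Integrable (fun z : (Fin p → ℝ) × (Fin q → ℝ) => z.2 i * z.1 j) π)
    (hM : frobNorm M ≤ r) : ipIntegral M π ≤ r * frobNorm (Cmat π) := by
  rw [ipIntegral_eq_sum_mul_Cmat M hint]
  exact (sum_mul_le_frobNorm_mul M _).trans
    (mul_le_mul_of_nonneg_right hM (frobNorm_nonneg _))

theorem ipIntegral_Mopt (r : ℝ)
    (hint : ∀ i j, Integrable (fun z : (Fin p → ℝ) × (Fin q → ℝ) => z.2 i * z.1 j) π) :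
    ipIntegral (Mopt r π) π = r * frobNorm (Cmat π) := by
  rw [ipIntegral_eq_sum_mul_Cmat _ hint, Mopt]
  split_ifs with hC
  · simp [hC, frobNorm]
  · simp only [Matrix.smul_apply, smul_eq_mul, mul_assoc, ← Finset.mul_sum, ← sq, ← frobNorm_sq]
    rcases eq_or_ne (frobNorm (Cmat π)) 0 with h0 | h0
    · simp [h0]
    · field_simp

theorem isLeast_Jip_Gred (α : Measure (Fin p → ℝ)) (β : Measure (Fin q → ℝ))
    (φ₁ φ₂ : ℝ → ℝ≥0∞) (ε : ℝ) {r : ℝ} (hr : 0 ≤ r)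
    (hint : ∀ i j, Integrable (fun z : (Fin p → ℝ) × (Fin q → ℝ) => z.2 i * z.1 j) π) :
    IsLeast ((Jip α β φ₁ φ₂ ε · π) '' {M | frobNorm M ≤ r}) (Gred α β φ₁ φ₂ ε r π) := by
  refine ⟨⟨Mopt r π, frobNorm_Mopt_le hr π, ?_⟩, ?_⟩
  · simp only [Jip, Gred, ipIntegral_Mopt r hint]
  · rintro _ ⟨M, hM, rfl⟩
    simp only [Jip, Gred]
    gcongr
    exact ipIntegral_le_mul_frobNorm_Cmat hint hM

end Reduction

theorem stmt9_general {p q : ℕ}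
    (X : Set (Fin p → ℝ)) (Y : Set (Fin q → ℝ))
    (hX : IsCompact X) (hY : IsCompact Y)
    (α : Measure (Fin p → ℝ)) (β : Measure (Fin q → ℝ))
    (φ₁ φ₂ : ℝ → ℝ≥0∞)
    (r : ℝ) (hr : 0 < r) (ε : ℝ)
    (Mstar : Matrix (Fin q) (Fin p) ℝ)
    (πstar : Measure ((Fin p → ℝ) × (Fin q → ℝ)))
    (hMstar : frobNorm Mstar ≤ r) (hπfin : IsFiniteMeasure πstar)
    (hπsupp : πstar ((X ×ˢ Y)ᶜ) = 0)
    (hmin : ∀ (M : Matrix (Fin q) (Fin p) ℝ)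
      (π : Measure ((Fin p → ℝ) × (Fin q → ℝ))),
      frobNorm M ≤ r → IsFiniteMeasure π → π ((X ×ˢ Y)ᶜ) = 0 →
      Jip α β φ₁ φ₂ ε Mstar πstar ≤ Jip α β φ₁ φ₂ ε M π) :
    (∀ π : Measure ((Fin p → ℝ) × (Fin q → ℝ)),
      IsFiniteMeasure π → π ((X ×ˢ Y)ᶜ) = 0 →
      Gred α β φ₁ φ₂ ε r πstar ≤ Gred α β φ₁ φ₂ ε r π) ∧
    Jip α β φ₁ φ₂ ε Mstar πstar = Gred α β φ₁ φ₂ ε r πstar := by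
  have hleast : ∀ π ∈ {π : Measure _ | IsFiniteMeasure π ∧ π ((X ×ˢ Y)ᶜ) = 0},
      IsLeast ((Jip α β φ₁ φ₂ ε · π) '' {M | frobNorm M ≤ r}) (Gred α β φ₁ φ₂ ε r π) := by
    rintro π ⟨hfin, hπ⟩
    refine isLeast_Jip_Gred α β φ₁ φ₂ ε hr.le fun i j => ?_
    exact (by fun_prop : Continuous _).integrable_of_measure_compl_eq_zero (hX.prod hY) hπ
  obtain ⟨hGmin, heq⟩ := isMinOn_and_eq_of_isLeast_image hleast hMstar ⟨hπfin, hπsupp⟩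
    fun M hM π ⟨hfin, hπ⟩ => hmin M π hM hfin hπ
  exact ⟨fun π hfin hπ => isMinOn_iff.1 hGmin π ⟨hfin, hπ⟩, heq⟩

/-- **Reduction to the functional `G_ε`.** If `(M*, π*)` minimizes the inner-product
cost-regularized UOT objective over `F_r × M⁺(X×Y)`, then `π*` minimizes the reduced
functional `G_ε` over `M⁺(X×Y)`, and the optimal values coincide. -/
theorem stmt9 {p q : ℕ}
    (X : Set (Fin p → ℝ)) (Y : Set (Fin q → ℝ))
    (hX : IsCompact X) (hY : IsCompact Y)
    (α : Measure (Fin p → ℝ)) (β : Measure (Fin q → ℝ))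
    [IsFiniteMeasure α] [IsFiniteMeasure β]
    (hα : α ≠ 0) (hβ : β ≠ 0)
    (hαsupp : α Xᶜ = 0) (hβsupp : β Yᶜ = 0)
    (φ₁ φ₂ : ℝ → ℝ≥0∞)
    (hφ₁ : IsEntropyFunction φ₁) (hφ₂ : IsEntropyFunction φ₂)
    (r : ℝ) (hr : 0 < r) (ε : ℝ) (hε : 0 ≤ ε)
    (Mstar : Matrix (Fin q) (Fin p) ℝ)
    (πstar : Measure ((Fin p → ℝ) × (Fin q → ℝ)))
    (hMstar : frobNorm Mstar ≤ r) (hπfin : IsFiniteMeasure πstar)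
    (hπsupp : πstar ((X ×ˢ Y)ᶜ) = 0)
    (hmin : ∀ (M : Matrix (Fin q) (Fin p) ℝ)
      (π : Measure ((Fin p → ℝ) × (Fin q → ℝ))),
      frobNorm M ≤ r → IsFiniteMeasure π → π ((X ×ˢ Y)ᶜ) = 0 →
      Jip α β φ₁ φ₂ ε Mstar πstar ≤ Jip α β φ₁ φ₂ ε M π) :
    (∀ π : Measure ((Fin p → ℝ) × (Fin q → ℝ)),
      IsFiniteMeasure π → π ((X ×ˢ Y)ᶜ) = 0 →
      Gred α β φ₁ φ₂ ε r πstar ≤ Gred α β φ₁ φ₂ ε r π) ∧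
    Jip α β φ₁ φ₂ ε Mstar πstar = Gred α β φ₁ φ₂ ε r πstar :=
  stmt9_general X Y hX hY α β φ₁ φ₂ r hr ε Mstar πstar hMstar hπfin hπsupp hmin
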